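/- Fix n ≥ 2, distinct unary atoms p₁, …, pₙ, and a binary atom r. Let Γ be the set of R-formulas consisting of: ∀(pᵢ, ∃(p_{i+1}, r)) for all 1 ≤ i < n; ∀(p₁, ∀(pₙ, r)); ∀(p, p) for every unary atom p; and ∀(pᵢ, p̄ⱼ) for all 1 ≤ i < j ≤ n. For 1 ≤ i < n, let Δᵢ = Γ ∖ {∀(pᵢ, ∃(p_{i+1}, r))}. Then for every 1 ≤ i < n and every R-formula φ, if Δᵢ ⊨ φ then φ ∈ Γ. -/

import Mathlib

/-!
Syllogistic logics (Pratt-Hartmann & Moss, "Logics for the Relational Syllogistic").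

Unary atoms and binary atoms are encoded by `ℕ` (two disjoint copies).
-/

namespace Syllogistic

/-- Unary literals: a unary atom `p` or its negation `p̄`. -/
inductive Lit : Type
  | pos : ℕ → Lit
  | neg : ℕ → Lit
deriving DecidableEq

/-- Binary literals: a binary atom `r` or its negation `r̄`. -/
inductive BLit : Type
  | pos : ℕ → BLit
  | neg : ℕ → BLit
deriving DecidableEq

/-- Bar (negation) on unary literals. -/
def Lit.bar : Lit → Lit
  | .pos p => .neg p
  | .neg p => .pos p

/-- Bar (negation) on binary literals. -/
def BLit.bar : BLit → BLit
  | .pos r => .neg r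
  | .neg r => .pos r

/-- A unary literal is positive if it is an atom. -/
def Lit.isPos : Lit → Prop
  | .pos _ => True
  | .neg _ => False

/-- A binary literal is positive if it is an atom. -/
def BLit.isPos : BLit → Prop
  | .pos _ => True
  | .neg _ => False

/-- e-terms: a unary literal `l`, or `∃(l,t)`, or `∀(l,t)`. -/
inductive ETerm : Type
  | lit : Lit → ETerm
  | ex : Lit → BLit → ETerm
  | al : Lit → BLit → ETerm
deriving DecidableEq

/-- The e-term consisting of a single positive unary atom. -/
def atomE (p : ℕ) : ETerm := .lit (.pos p)

/-- Bar on e-terms: `∀(l,t)‾ = ∃(l,t̄)` and `∃(l,t)‾ = ∀(l,t̄)`. -/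
def ETerm.bar : ETerm → ETerm
  | .lit l => .lit l.bar
  | .ex l t => .al l t.bar
  | .al l t => .ex l t.bar

/-- c-terms: a unary literal, or `∃(p,t)`/`∀(p,t)` with `p` a unary atom. -/
def ETerm.isC : ETerm → Prop
  | .lit _ => True
  | .ex l _ => l.isPos
  | .al l _ => l.isPos

/-- Positive c-terms: the literals occurring in them are positive. -/
def ETerm.isPosC : ETerm → Prop
  | .lit l => l.isPos
  | .ex l t => l.isPos ∧ t.isPos
  | .al l t => l.isPos ∧ t.isPos

/-- R*†-formulas: `∃(e,f)` or `∀(e,f)` for e-terms `e`, `f`. -/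
inductive Formula : Type
  | ex : ETerm → ETerm → Formula
  | al : ETerm → ETerm → Formula
deriving DecidableEq

/-- Negation of a formula: `∀(e,f)‾ = ∃(e,f̄)`, `∃(e,f)‾ = ∀(e,f̄)`. -/
def Formula.bar : Formula → Formula
  | .ex e f => .al e f.bar
  | .al e f => .ex e f.bar

/-- The silent identification: `∃(e,f)` with `∃(f,e)`, and `∀(e,f)` with `∀(f̄,ē)`. -/
def Formula.swap : Formula → Formula
  | .ex e f => .ex f e
  | .al e f => .al f.bar e.bar

/-- Two formulas are identified if they are equal or are swaps of each other. -/
def FormEquiv (φ ψ : Formula) : Prop := ψ = φ ∨ ψ = φ.swap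

/-- An absurdity is a formula of the form `∃(e,ē)`. -/
def IsAbsurd (φ : Formula) : Prop := ∃ e : ETerm, φ = .ex e e.bar

/-- A substitution maps unary atoms to unary atoms and binary atoms to binary atoms. -/
structure Subst where
  u : ℕ → ℕ
  b : ℕ → ℕ

def Lit.subst (g : Subst) : Lit → Lit
  | .pos p => .pos (g.u p)
  | .neg p => .neg (g.u p)

def BLit.subst (g : Subst) : BLit → BLit
  | .pos r => .pos (g.b r)
  | .neg r => .neg (g.b r)

def ETerm.subst (g : Subst) : ETerm → ETerm
  | .lit l => .lit (l.subst g)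
  | .ex l t => .ex (l.subst g) (t.subst g)
  | .al l t => .al (l.subst g) (t.subst g)

/-- Atom-wise application of a substitution to a formula. -/
def Formula.subst (g : Subst) : Formula → Formula
  | .ex e f => .ex (e.subst g) (f.subst g)
  | .al e f => .al (e.subst g) (f.subst g)

/-- A structure over a domain `A`: an interpretation of every unary atom as a
subset of `A` and of every binary atom as a binary relation on `A`.
(Non-emptiness of the domain is imposed where structures are quantified over.) -/
structure Interp (A : Type) where
  up : ℕ → Set A
  br : ℕ → Set (A × A)

def Interp.litI {A : Type} (M : Interp A) : Lit → Set A
  | .pos p => M.up p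
  | .neg p => (M.up p)ᶜ

def Interp.blitI {A : Type} (M : Interp A) : BLit → Set (A × A)
  | .pos r => M.br r
  | .neg r => (M.br r)ᶜ

/-- Interpretation of e-terms. -/
def Interp.etermI {A : Type} (M : Interp A) : ETerm → Set A
  | .lit l => M.litI l
  | .ex l t => {a | ∃ b ∈ M.litI l, (a, b) ∈ M.blitI t}
  | .al l t => {a | ∀ b ∈ M.litI l, (a, b) ∈ M.blitI t}

/-- Truth of a formula in a structure. -/
def Interp.Sat {A : Type} (M : Interp A) : Formula → Prop
  | .al e f => M.etermI e ⊆ M.etermI f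
  | .ex e f => (M.etermI e ∩ M.etermI f).Nonempty

/-- Truth of a set of formulas in a structure. -/
def Interp.SatSet {A : Type} (M : Interp A) (Θ : Set Formula) : Prop :=
  ∀ θ ∈ Θ, M.Sat θ

/-- `Θ ⊨ θ`: every structure (with non-empty domain) satisfying `Θ` satisfies `θ`. -/
def Entails (Θ : Set Formula) (θ : Formula) : Prop :=
  ∀ (A : Type), Nonempty A → ∀ M : Interp A, M.SatSet Θ → M.Sat θ

/-- `Θ` is satisfied in some structure with non-empty domain. -/
def Satisfiable (Θ : Set Formula) : Prop :=
  ∃ (A : Type), Nonempty A ∧ ∃ M : Interp A, M.SatSet Θ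

/-- A syllogistic rule: a finite set of antecedents together with a consequent. -/
structure SylRule where
  ants : Finset Formula
  con : Formula

/-- A rule is sound if its antecedents entail its consequent. -/
def SylRule.Sound (R : SylRule) : Prop := Entails (↑R.ants) R.con

/-- A rule is a rule *in* the fragment `F` if all its formulas lie in `F`. -/
def RuleIn (F : Set Formula) (R : SylRule) : Prop :=
  (∀ ψ ∈ R.ants, ψ ∈ F) ∧ R.con ∈ F

/-- The instance of a rule under a substitution. -/
def SylRule.inst (g : Subst) (R : SylRule) : SylRule :=
  ⟨R.ants.image (Formula.subst g), R.con.subst g⟩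

/-- Two rules are the same modulo the identification of formulas. -/
def RuleEquiv (R R' : SylRule) : Prop :=
  (∀ ψ ∈ R.ants, ∃ ψ' ∈ R'.ants, FormEquiv ψ ψ') ∧
  (∀ ψ' ∈ R'.ants, ∃ ψ ∈ R.ants, FormEquiv ψ ψ') ∧
  FormEquiv R.con R'.con

/-- The direct derivation relation `⊢_X` determined by a set `X` of syllogistic
rules: premises may be used, and instances of rules applied; formulas are
treated up to the silent identification. -/
inductive Derives (X : Set SylRule) : Set Formula → Formula → Prop
  | mem {Θ : Set Formula} {θ : Formula} : θ ∈ Θ → Derives X Θ θ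
  | rule {Θ : Set Formula} (R : SylRule) (g : Subst) :
      R ∈ X → (∀ ψ ∈ R.ants, Derives X Θ (ψ.subst g)) →
      Derives X Θ (R.con.subst g)
  | ident {Θ : Set Formula} {φ ψ : Formula} :
      Derives X Θ φ → FormEquiv φ ψ → Derives X Θ ψ

/-- The indirect derivation relation `⊩_X`: as `⊢_X`, together with
*reductio ad absurdum*. -/
inductive IDerives (X : Set SylRule) : Set Formula → Formula → Prop
  | mem {Θ : Set Formula} {θ : Formula} : θ ∈ Θ → IDerives X Θ θ
  | rule {Θ : Set Formula} (R : SylRule) (g : Subst) :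
      R ∈ X → (∀ ψ ∈ R.ants, IDerives X Θ (ψ.subst g)) →
      IDerives X Θ (R.con.subst g)
  | ident {Θ : Set Formula} {φ ψ : Formula} :
      IDerives X Θ φ → FormEquiv φ ψ → IDerives X Θ ψ
  | raa {Θ : Set Formula} {θ b : Formula} :
      IsAbsurd b → IDerives X (Θ ∪ {θ.bar}) b → IDerives X Θ θ

/-- Soundness of a derivation relation for the fragment `F`. -/
def SoundFor (F : Set Formula) (D : Set Formula → Formula → Prop) : Prop :=
  ∀ (Θ : Set Formula) (θ : Formula), Θ ⊆ F → θ ∈ F → D Θ θ → Entails Θ θ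

/-- Completeness of a derivation relation for the fragment `F`. -/
def CompleteFor (F : Set Formula) (D : Set Formula → Formula → Prop) : Prop :=
  ∀ (Θ : Set Formula) (θ : Formula), Θ ⊆ F → θ ∈ F → Entails Θ θ → D Θ θ

/-- Refutation-completeness for the fragment `F`: every unsatisfiable set of
`F`-formulas derives some absurdity. -/
def RefutationCompleteFor (F : Set Formula) (D : Set Formula → Formula → Prop) : Prop :=
  ∀ Θ : Set Formula, Θ ⊆ F → ¬ Satisfiable Θ → ∃ b, IsAbsurd b ∧ D Θ b

/-- Consistency of a set of formulas with respect to `⊩_X`. -/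
def Consistent (X : Set SylRule) (Θ : Set Formula) : Prop :=
  ¬ ∃ b, IsAbsurd b ∧ IDerives X Θ b

/-! ### The six fragments -/

/-- The fragment `S`: `∃(p,l)`, `∃(l,p)`, `∀(p,l)`, `∀(l,p̄)`. -/
def FragS : Set Formula :=
  {φ | (∃ (p : ℕ) (l : Lit), φ = .ex (atomE p) (.lit l)) ∨
       (∃ (p : ℕ) (l : Lit), φ = .ex (.lit l) (atomE p)) ∨
       (∃ (p : ℕ) (l : Lit), φ = .al (atomE p) (.lit l)) ∨
       (∃ (p : ℕ) (l : Lit), φ = .al (.lit l) (.lit (.neg p)))}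

/-- The fragment `S†`: `∃(l,m)`, `∀(l,m)` for unary literals `l`, `m`. -/
def FragSdag : Set Formula :=
  {φ | ∃ l m : Lit, φ = .ex (.lit l) (.lit m) ∨ φ = .al (.lit l) (.lit m)}

/-- The fragment `R`: `∃(p,c)`, `∃(c,p)`, `∀(p,c)`, `∀(c,p̄)` for a c-term `c`. -/
def FragR : Set Formula :=
  {φ | ∃ (p : ℕ) (c : ETerm), c.isC ∧
       (φ = .ex (atomE p) c ∨ φ = .ex c (atomE p) ∨
        φ = .al (atomE p) c ∨ φ = .al c (.lit (.neg p)))}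

/-- The fragment `R†`: `∃(l,e)`, `∃(e,l)`, `∀(l,e)`, `∀(e,l)` for an e-term `e`. -/
def FragRdag : Set Formula :=
  {φ | ∃ (l : Lit) (e : ETerm),
       φ = .ex (.lit l) e ∨ φ = .ex e (.lit l) ∨
       φ = .al (.lit l) e ∨ φ = .al e (.lit l)}

/-- The fragment `R*`: `∃(c⁺,d)`, `∃(d,c⁺)`, `∀(c⁺,d)`, `∀(d,c⁺‾)` with `c⁺` a
positive c-term and `d` a c-term. -/
def FragRstar : Set Formula :=
  {φ | ∃ c d : ETerm, c.isPosC ∧ d.isC ∧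
       (φ = .ex c d ∨ φ = .ex d c ∨ φ = .al c d ∨ φ = .al d c.bar)}

/-- The fragment `R*†`: all formulas. -/
def FragRstardag : Set Formula := Set.univ

/-- The six syllogistic fragments. -/
def IsFragment (F : Set Formula) : Prop :=
  F = FragS ∨ F = FragSdag ∨ F = FragR ∨ F = FragRdag ∨ F = FragRstar ∨ F = FragRstardag

/-! ### Rule sets -/

/-- The rule set `S`: (D1), (D2), (D3), (B), (A), (T), (I), (X). -/
def RuleSetS : Set SylRule :=
  {R | (∃ (p q : ℕ) (l : Lit),
          R = ⟨{.al (atomE q) (.lit l), .ex (atomE p) (atomE q)}, .ex (atomE p) (.lit l)⟩) ∨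
       (∃ (p q : ℕ) (l : Lit),
          R = ⟨{.ex (atomE p) (.lit l), .al (atomE p) (atomE q)}, .ex (atomE q) (.lit l)⟩) ∨
       (∃ (p q : ℕ) (l : Lit),
          R = ⟨{.al (atomE q) (.lit l.bar), .ex (atomE p) (.lit l)}, .ex (atomE p) (.lit (.neg q))⟩) ∨
       (∃ (p q : ℕ) (l : Lit),
          R = ⟨{.al (atomE p) (atomE q), .al (atomE q) (.lit l)}, .al (atomE p) (.lit l)⟩) ∨
       (∃ (p : ℕ) (l : Lit),
          R = ⟨{.al (atomE p) (.lit (.neg p))}, .al (atomE p) (.lit l)⟩) ∨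
       (∃ p : ℕ, R = ⟨∅, .al (atomE p) (atomE p)⟩) ∨
       (∃ (p : ℕ) (l : Lit),
          R = ⟨{.ex (atomE p) (.lit l)}, .ex (atomE p) (atomE p)⟩) ∨
       (∃ φ ψ : Formula, φ ∈ FragS ∧ ψ ∈ FragS ∧ R = ⟨{ψ, ψ.bar}, φ⟩)}

/-- The rule set `S†`: (D), (B), (A), (T), (I), (N), (X). -/
def RuleSetSdag : Set SylRule :=
  {R | (∃ l m n : Lit,
          R = ⟨{.ex (.lit l) (.lit n), .al (.lit l) (.lit m)}, .ex (.lit m) (.lit n)⟩) ∨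
       (∃ l m n : Lit,
          R = ⟨{.al (.lit l) (.lit m), .al (.lit m) (.lit n)}, .al (.lit l) (.lit n)⟩) ∨
       (∃ l m : Lit, R = ⟨{.al (.lit l) (.lit l.bar)}, .al (.lit l) (.lit m)⟩) ∨
       (∃ l : Lit, R = ⟨∅, .al (.lit l) (.lit l)⟩) ∨
       (∃ l m : Lit, R = ⟨{.ex (.lit l) (.lit m)}, .ex (.lit l) (.lit l)⟩) ∨
       (∃ l : Lit, R = ⟨{.al (.lit l.bar) (.lit l)}, .ex (.lit l) (.lit l)⟩) ∨
       (∃ φ ψ : Formula, φ ∈ FragSdag ∧ ψ ∈ FragSdag ∧ R = ⟨{ψ, ψ.bar}, φ⟩)}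

/-- The rules (B), (T) and (A) of the rule set `S†`. -/
def RuleSetBTA : Set SylRule :=
  {R | (∃ l m n : Lit,
          R = ⟨{.al (.lit l) (.lit m), .al (.lit m) (.lit n)}, .al (.lit l) (.lit n)⟩) ∨
       (∃ l : Lit, R = ⟨∅, .al (.lit l) (.lit l)⟩) ∨
       (∃ l m : Lit, R = ⟨{.al (.lit l) (.lit l.bar)}, .al (.lit l) (.lit m)⟩)}

/-- The rule set `R`: (D1), (D2), (D3), (B), (T), (I), (A), (II), (∀∀), (∃∃), (∀∃). -/
def RuleSetR : Set SylRule :=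
  {R | (∃ (p q : ℕ) (c : ETerm), c.isC ∧
          R = ⟨{.ex (atomE p) (atomE q), .al (atomE q) c}, .ex (atomE p) c⟩) ∨
       (∃ (p q : ℕ) (c : ETerm), c.isC ∧
          R = ⟨{.al (atomE p) (atomE q), .ex (atomE p) c}, .ex (atomE q) c⟩) ∨
       (∃ (p q : ℕ) (c : ETerm), c.isC ∧
          R = ⟨{.al (atomE q) c.bar, .ex (atomE p) c}, .ex (atomE p) (.lit (.neg q))⟩) ∨
       (∃ (p q : ℕ) (c : ETerm), c.isC ∧
          R = ⟨{.al (atomE p) (atomE q), .al (atomE q) c}, .al (atomE p) c⟩) ∨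
       (∃ p : ℕ, R = ⟨∅, .al (atomE p) (atomE p)⟩) ∨
       (∃ (p : ℕ) (c : ETerm), c.isC ∧
          R = ⟨{.ex (atomE p) c}, .ex (atomE p) (atomE p)⟩) ∨
       (∃ (p : ℕ) (c : ETerm), c.isC ∧
          R = ⟨{.al (atomE p) (.lit (.neg p))}, .al (atomE p) c⟩) ∨
       (∃ (p q : ℕ) (t : BLit),
          R = ⟨{.ex (atomE p) (.ex (.pos q) t)}, .ex (atomE q) (atomE q)⟩) ∨
       (∃ (p q q' : ℕ) (t : BLit),
          R = ⟨{.al (atomE p) (.al (.pos q') t), .ex (atomE q) (atomE q')},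
               .al (atomE p) (.ex (.pos q) t)⟩) ∨
       (∃ (p q q' : ℕ) (t : BLit),
          R = ⟨{.ex (atomE p) (.ex (.pos q) t), .al (atomE q) (atomE q')},
               .ex (atomE p) (.ex (.pos q') t)⟩) ∨
       (∃ (p q q' : ℕ) (t : BLit),
          R = ⟨{.al (atomE p) (.ex (.pos q) t), .al (atomE q) (atomE q')},
               .al (atomE p) (.ex (.pos q') t)⟩)}

/-- The rule set `R*`: (T), (I), (B), (D1), (D2), (J), (K), (L), (II), (Z), (W). -/
def RuleSetRstar : Set SylRule :=
  {R | (∃ c : ETerm, c.isPosC ∧ R = ⟨∅, .al c c⟩) ∨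
       (∃ c d : ETerm, c.isPosC ∧ d.isC ∧ R = ⟨{.ex c d}, .ex c c⟩) ∨
       (∃ b c d : ETerm, b.isPosC ∧ c.isPosC ∧ d.isC ∧
          R = ⟨{.al b c, .al c d}, .al b d⟩) ∨
       (∃ b c d : ETerm, b.isPosC ∧ c.isPosC ∧ d.isC ∧
          R = ⟨{.ex b c, .al c d}, .ex b d⟩) ∨
       (∃ b c d : ETerm, b.isPosC ∧ c.isPosC ∧ d.isC ∧
          R = ⟨{.al b c, .ex b d}, .ex c d⟩) ∨
       (∃ p q r : ℕ,
          R = ⟨{.al (atomE p) (atomE q)},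
               .al (.al (.pos q) (.pos r)) (.al (.pos p) (.pos r))⟩) ∨
       (∃ p q r : ℕ,
          R = ⟨{.al (atomE p) (atomE q)},
               .al (.ex (.pos p) (.pos r)) (.ex (.pos q) (.pos r))⟩) ∨
       (∃ p q r : ℕ,
          R = ⟨{.ex (atomE p) (atomE q)},
               .al (.al (.pos p) (.pos r)) (.ex (.pos q) (.pos r))⟩) ∨
       (∃ p q r : ℕ,
          R = ⟨{.ex (atomE q) (.ex (.pos p) (.pos r))}, .ex (atomE p) (atomE p)⟩) ∨
       (∃ (p r : ℕ) (c : ETerm), c.isPosC ∧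
          R = ⟨{.al (atomE p) (.lit (.neg p))}, .al c (.al (.pos p) (.pos r))⟩) ∨
       (∃ p r : ℕ,
          R = ⟨{.al (atomE p) (.lit (.neg p))},
               .ex (.al (.pos p) (.pos r)) (.al (.pos p) (.pos r))⟩)}

/-! ### Auxiliary notions for particular statements -/

/-- Universal S†-formulas. -/
def IsUnivSdag (φ : Formula) : Prop := ∃ l m : Lit, φ = .al (.lit l) (.lit m)

/-- Existential S†-formulas. -/
def IsExSdag (φ : Formula) : Prop := ∃ l m : Lit, φ = .ex (.lit l) (.lit m)

/-- The closure `V^Φ` of a set of unary literals: all `m` with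
`Φ ⊢_BTA ∀(l,m)` for some `l ∈ V`. -/
def litClosure (Φ : Set Formula) (V : Set Lit) : Set Lit :=
  {m | ∃ l ∈ V, Derives RuleSetBTA Φ (.al (.lit l) (.lit m))}

/-- Membership in a set of formulas, modulo the silent identification. -/
def MemMod (Γ : Set Formula) (φ : Formula) : Prop := ∃ ψ ∈ Γ, FormEquiv φ ψ

/-- The reachability relation `c ⇒ d` determined by `Γ`. -/
def Reach (Γ : Set Formula) (c d : ETerm) : Prop :=
  c = d ∨ ∃ (k : ℕ) (p : ℕ → ℕ), c = atomE (p 0) ∧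
    MemMod Γ (.al (atomE (p k)) d) ∧
    ∀ i < k, MemMod Γ (.al (atomE (p i)) (atomE (p (i + 1))))

/-- `V ⇒ d` for a set `V` of c-terms. -/
def ReachSet (Γ : Set Formula) (V : Set ETerm) (d : ETerm) : Prop :=
  ∃ c ∈ V, Reach Γ c d

/-- The witness sets `B_k`; the formal object `b_{V,i}` is encoded as the
pair `(V, i)`. -/
def BSet (Γ : Set Formula) : ℕ → Set (Set ETerm × ℕ)
  | 0 => {x | ∃ (p : ℕ) (c : ETerm), c.isC ∧ MemMod Γ (.ex (atomE p) c) ∧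
            x = ({atomE p, c}, 0)}
  | k + 1 => BSet Γ k ∪
      {x | ∃ (p i : ℕ), (i = 1 ∨ i = 2) ∧
        (∃ y ∈ BSet Γ k, ∃ t : BLit, ReachSet Γ y.1 (.ex (.pos p) t)) ∧
        x = ({atomE p}, i)}

/-- The witness set `B = ⋃_k B_k`. -/
def BAll (Γ : Set Formula) : Set (Set ETerm × ℕ) := ⋃ k, BSet Γ k

/-- Condition (C). -/
def CondC (Γ : Set Formula) : Prop :=
  ∃ (V : Set ETerm) (i : ℕ) (W : Set ETerm) (j : ℕ),
    (V, i) ∈ BAll Γ ∧ (W, j) ∈ BAll Γ ∧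
    ∃ q o r : ℕ,
      ((ReachSet Γ V (atomE q) ∧ ReachSet Γ V (.lit (.neg q))) ∨
       (ReachSet Γ V (.ex (.pos q) (.neg r)) ∧ ReachSet Γ V (.al (.pos o) (.pos r)) ∧
         Reach Γ (atomE q) (atomE o)) ∨
       (ReachSet Γ V (.al (.pos q) (.neg r)) ∧ ReachSet Γ V (.ex (.pos o) (.pos r)) ∧
         Reach Γ (atomE o) (atomE q)) ∨
       (ReachSet Γ V (.al (.pos q) (.neg r)) ∧ ReachSet Γ V (.al (.pos o) (.pos r)) ∧
         ReachSet Γ W (atomE q) ∧ ReachSet Γ W (atomE o)))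

/-- The set `Γ` of R-formulas used in the proof that `R` admits no sound
and complete direct syllogistic system (indices `0,…,n-1`). -/
def GammaSet (n : ℕ) (p : ℕ → ℕ) (r : ℕ) : Set Formula :=
  {φ | (∃ i, i + 1 < n ∧ φ = .al (atomE (p i)) (.ex (.pos (p (i + 1))) (.pos r))) ∨
       φ = .al (atomE (p 0)) (.al (.pos (p (n - 1))) (.pos r)) ∨
       (∃ q : ℕ, φ = .al (atomE q) (atomE q)) ∨
       (∃ i j, i < j ∧ j < n ∧ φ = .al (atomE (p i)) (.lit (.neg (p j))))}

/-- `Γ` is R*-complete: for every R*-formula `θ`, `θ ∈ Γ` or `θ̄ ∈ Γ`. -/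
def RstarComplete (Γ : Set Formula) : Prop :=
  ∀ θ ∈ FragRstar, θ ∈ Γ ∨ Formula.bar θ ∈ Γ

/-- Domain of the canonical structure for `Γ`: triples `(c₁,c₂,Q)` of two
positive c-terms and a quantifier (`Bool`, with `true` rendering `∃` and
`false` rendering `∀`) such that `Γ ⊩_{R*} ∃(c₁,c₂)`. -/
abbrev CanonA (Γ : Set Formula) : Type :=
  {x : ETerm × ETerm × Bool //
    x.1.isPosC ∧ x.2.1.isPosC ∧ IDerives RuleSetRstar Γ (.ex x.1 x.2.1)}

/-- The canonical structure constructed from `Γ`. -/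
def CanonInterp (Γ : Set Formula) : Interp (CanonA Γ) where
  up p := {x | IDerives RuleSetRstar Γ (.al x.val.1 (atomE p)) ∨
               IDerives RuleSetRstar Γ (.al x.val.2.1 (atomE p))}
  br r := {ab |
      (∃ c ∈ ({ab.1.val.1, ab.1.val.2.1} : Set ETerm),
       ∃ d ∈ ({ab.2.val.1, ab.2.val.2.1} : Set ETerm),
       ∃ q : ℕ,
         IDerives RuleSetRstar Γ (.al c (.al (.pos q) (.pos r))) ∧
         IDerives RuleSetRstar Γ (.al d (atomE q))) ∨
      (ab.2.val.2.2 = true ∧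
       ∃ q : ℕ, ab.2.val.1 = atomE q ∧ ab.2.val.2.1 = atomE q ∧
       ∃ c ∈ ({ab.1.val.1, ab.1.val.2.1} : Set ETerm),
         IDerives RuleSetRstar Γ (.al c (.ex (.pos q) (.pos r))))}
/-!
Every R-formula outside `Γ` fails in some model of `Δᵢ`. Existential formulas fail once every
unary atom is empty, and `∀(c, q̄)` is identified with `∀(q, c̄)`, so only `∀(q, c)` needs
work. Put `p j` at point `j` and every other atom at a point of its own beyond `n`. Two models
of all of `Γ` then refute everything except the formulas of `Γ` and `∀(p₀, ∃(pₙ₋₁, r))`: one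
where the atoms other than the `p j` fill the domain and every relation is full, and a chain
in which each atom has two points and `r` links every point of `p j` to one point of `p (j+1)`
and `p 0` to all of `p (n-1)`. The last formula is where `Δᵢ` differs from `Γ`: the chain
`p 0 → ⋯ → p i` with `p (i+1), …, p (n-1)` empty satisfies `Δᵢ`, but `p 0` has no
`r`-successor in the empty `p (n-1)`.
-/

section Identification

lemma Lit.bar_bar (l : Lit) : l.bar.bar = l := by cases l <;> rfl

lemma BLit.bar_bar (t : BLit) : t.bar.bar = t := by cases t <;> rfl

lemma ETerm.bar_bar (e : ETerm) : e.bar.bar = e := by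
  cases e <;> simp only [ETerm.bar, Lit.bar_bar, BLit.bar_bar]

lemma ETerm.isC.bar {e : ETerm} (h : e.isC) : e.bar.isC := by
  cases e <;> exact h

lemma Formula.swap_swap (φ : Formula) : φ.swap.swap = φ := by
  cases φ <;> simp only [Formula.swap, ETerm.bar_bar]

lemma FormEquiv.of_swap {φ ψ : Formula} (h : FormEquiv φ.swap ψ) : FormEquiv φ ψ := by
  rw [FormEquiv, Formula.swap_swap] at h
  exact h.symm

lemma MemMod.of_swap {Γ : Set Formula} {φ : Formula} (h : MemMod Γ φ.swap) : MemMod Γ φ :=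
  let ⟨ψ, hψ, hφψ⟩ := h
  ⟨ψ, hψ, hφψ.of_swap⟩

variable {A : Type} (M : Interp A)

lemma Interp.litI_bar (l : Lit) : M.litI l.bar = (M.litI l)ᶜ := by
  cases l <;> simp only [Lit.bar, Interp.litI, compl_compl]

lemma Interp.blitI_bar (t : BLit) : M.blitI t.bar = (M.blitI t)ᶜ := by
  cases t <;> simp only [BLit.bar, Interp.blitI, compl_compl]

lemma Interp.etermI_bar (e : ETerm) : M.etermI e.bar = (M.etermI e)ᶜ := by
  cases e with
  | lit l => exact M.litI_bar l
  | ex l t => ext a; simp [ETerm.bar, Interp.etermI, Interp.blitI_bar]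
  | al l t => ext a; simp [ETerm.bar, Interp.etermI, Interp.blitI_bar]

lemma Interp.sat_swap (φ : Formula) : M.Sat φ.swap ↔ M.Sat φ := by
  cases φ with
  | ex e f => simp only [Formula.swap, Interp.Sat, Set.inter_comm]
  | al e f => simp only [Formula.swap, Interp.Sat, Interp.etermI_bar, Set.compl_subset_compl]

lemma Entails.mono {Θ Θ' : Set Formula} {φ : Formula} (hΘ : Θ ⊆ Θ') (h : Entails Θ φ) :
    Entails Θ' φ :=
  fun A hA M hM => h A hA M fun θ hθ => hM θ (hΘ hθ)

lemma Entails.swap {Θ : Set Formula} {φ : Formula} (h : Entails Θ φ) : Entails Θ φ.swap :=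
  fun A hA M hM => (M.sat_swap φ).2 (h A hA M hM)

end Identification

def DeltaSet (n : ℕ) (p : ℕ → ℕ) (r i : ℕ) : Set Formula :=
  GammaSet n p r \ {.al (atomE (p i)) (.ex (.pos (p (i + 1))) (.pos r))}

section Countermodels

variable {n : ℕ} {p : ℕ → ℕ} {r : ℕ}

open Classical in
/-- Atoms are placed at positions of `ℕ`: `p j` at `j` for `j < n`, any other atom `x`
at `n + x`. -/
noncomputable def atomIndex (n : ℕ) (p : ℕ → ℕ) (x : ℕ) : ℕ :=
  if h : ∃ j < n, p j = x then Nat.find h else n + x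

lemma atomIndex_spec (x : ℕ) :
    (atomIndex n p x < n ∧ p (atomIndex n p x) = x) ∨ atomIndex n p x = n + x := by
  unfold atomIndex
  split_ifs with h
  · exact Or.inl (Nat.find_spec h)
  · exact Or.inr rfl

lemma apply_atomIndex {x : ℕ} (h : atomIndex n p x < n) : p (atomIndex n p x) = x := by
  rcases atomIndex_spec (n := n) (p := p) x with h' | h'
  · exact h'.2
  · omega

lemma atomIndex_apply (hp : ∀ i < n, ∀ j < n, p i = p j → i = j) {j : ℕ} (hj : j < n) :
    atomIndex n p (p j) = j := by
  rcases atomIndex_spec (n := n) (p := p) (p j) with ⟨hlt, heq⟩ | h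
  · exact hp _ hlt _ hj heq
  · have hex : ∃ k < n, p k = p j := ⟨j, hj, rfl⟩
    simp only [atomIndex, dif_pos hex] at h
    have := (Nat.find_spec hex).1
    omega

lemma eq_apply_of_atomIndex_eq {x j : ℕ} (h : atomIndex n p x = j) (hj : j < n) :
    x = p j := by
  subst h
  exact (apply_atomIndex hj).symm

lemma atomIndex_injective : Function.Injective (atomIndex n p) := by
  intro x y hxy
  rcases atomIndex_spec (n := n) (p := p) x with ⟨hx, hpx⟩ | hx
  · have hy : atomIndex n p y < n := hxy ▸ hx
    calc x = p (atomIndex n p x) := hpx.symm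
      _ = p (atomIndex n p y) := by rw [hxy]
      _ = y := apply_atomIndex hy
  · rcases atomIndex_spec (n := n) (p := p) y with ⟨hy, -⟩ | hy <;> omega

lemma satSet_of_subset_gammaSet {A : Type} (M : Interp A) {Θ : Set Formula}
    (hΘ : Θ ⊆ GammaSet n p r)
    (hchain : ∀ j, j + 1 < n →
      .al (atomE (p j)) (.ex (.pos (p (j + 1))) (.pos r)) ∈ Θ →
      ∀ a ∈ M.up (p j), ∃ b ∈ M.up (p (j + 1)), (a, b) ∈ M.br r)
    (hclose : ∀ a ∈ M.up (p 0), ∀ b ∈ M.up (p (n - 1)), (a, b) ∈ M.br r)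
    (hdisj : ∀ j k, j < k → k < n → ∀ a ∈ M.up (p j), a ∉ M.up (p k)) :
    M.SatSet Θ := by
  intro θ hθ
  rcases hΘ hθ with ⟨j, hj, rfl⟩ | rfl | ⟨q, rfl⟩ | ⟨j, k, hjk, hk, rfl⟩
  · exact hchain j hj hθ
  · exact hclose
  · exact subset_rfl
  · exact hdisj j k hjk hk

def emptyModel : Interp Unit := ⟨fun _ => ∅, fun _ => ∅⟩

lemma not_entails_ex_atom {Θ : Set Formula} (hΘ : Θ ⊆ GammaSet n p r) (q : ℕ) (e : ETerm) :
    ¬ Entails Θ (.ex (atomE q) e) := by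
  intro h
  have hM : emptyModel.SatSet Θ :=
    satSet_of_subset_gammaSet _ hΘ (fun _ _ _ _ h => h.elim) (fun _ h => h.elim)
      (fun _ _ _ _ _ h => h.elim)
  obtain ⟨_, h, -⟩ := h Unit ⟨()⟩ emptyModel hM
  exact h

noncomputable def overlapModel (n : ℕ) (p : ℕ → ℕ) : Interp ℕ :=
  ⟨fun x => {a | a = atomIndex n p x ∨ n ≤ atomIndex n p x}, fun _ => Set.univ⟩

lemma overlapModel_satSet (hp : ∀ i < n, ∀ j < n, p i = p j → i = j) :
    (overlapModel n p).SatSet (GammaSet n p r) := by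
  have hpj : ∀ j < n, ∀ a ∈ (overlapModel n p).up (p j), a = j := by
    rintro j hj a (ha | ha) <;> rw [atomIndex_apply hp hj] at ha <;> omega
  refine satSet_of_subset_gammaSet _ subset_rfl (fun j hj _ _ _ => ⟨j + 1, ?_, trivial⟩)
    (fun _ _ _ _ => trivial) fun j k hjk hk a ha ha' => ?_
  · exact Or.inl (atomIndex_apply hp hj).symm
  · have := hpj j (hjk.trans hk) a ha
    have := hpj k hk a ha'
    omega

lemma exists_of_entails_al_lit_neg (hp : ∀ i < n, ∀ j < n, p i = p j → i = j) {q q' : ℕ}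
    (h : Entails (GammaSet n p r) (.al (atomE q) (.lit (.neg q')))) :
    ∃ j k, j < n ∧ k < n ∧ j ≠ k ∧ q = p j ∧ q' = p k := by
  have hM := h ℕ ⟨0⟩ _ (overlapModel_satSet hp)
  have hq : atomIndex n p q < n := by
    by_contra hq
    exact hM (Or.inr (not_lt.1 hq)) (Or.inl rfl)
  have hq' : atomIndex n p q' < n := by
    by_contra hq'
    exact hM (Or.inl rfl) (Or.inr (not_lt.1 hq'))
  exact ⟨_, _, hq, hq', fun hqq' => hM (Or.inl rfl) (Or.inl hqq'),
    (apply_atomIndex hq).symm, (apply_atomIndex hq').symm⟩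

lemma not_entails_al_ex_neg (hp : ∀ i < n, ∀ j < n, p i = p j → i = j) (q q' s : ℕ) :
    ¬ Entails (GammaSet n p r) (.al (atomE q) (.ex (.pos q') (.neg s))) := by
  intro h
  obtain ⟨_, -, hb⟩ := h ℕ ⟨0⟩ _ (overlapModel_satSet hp) (Or.inl (rfl : atomIndex n p q = _))
  exact hb trivial

lemma not_entails_al_al_neg (hp : ∀ i < n, ∀ j < n, p i = p j → i = j) (q q' s : ℕ) :
    ¬ Entails (GammaSet n p r) (.al (atomE q) (.al (.pos q') (.neg s))) :=
  fun h => h ℕ ⟨0⟩ _ (overlapModel_satSet hp) (Or.inl (rfl : atomIndex n p q = _))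
    (atomIndex n p q') (Or.inl rfl) trivial

noncomputable def chainModel (n : ℕ) (p : ℕ → ℕ) (r : ℕ) : Interp (ℕ × Bool) :=
  ⟨fun x => {a | a.1 = atomIndex n p x}, fun s => {ab | s = r ∧
    ((ab.2 = (ab.1.1 + 1, false) ∧ ab.1.1 + 1 < n) ∨ (ab.1.1 = 0 ∧ ab.2.1 = n - 1))}⟩

lemma chainModel_satSet (hn : 0 < n) (hp : ∀ i < n, ∀ j < n, p i = p j → i = j) :
    (chainModel n p r).SatSet (GammaSet n p r) := by
  refine satSet_of_subset_gammaSet _ subset_rfl (fun j hj _ a ha => ?_) (fun a ha b hb => ?_)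
    fun j k hjk hk a ha ha' => ?_
  · have ha : a.1 = j := (atomIndex_apply hp (Nat.lt_of_succ_lt hj)) ▸ ha
    exact ⟨(j + 1, false), (atomIndex_apply hp hj).symm, rfl, Or.inl ⟨by rw [ha], by rwa [ha]⟩⟩
  · simp only [chainModel, Set.mem_ofPred_eq, atomIndex_apply hp hn,
      atomIndex_apply hp (Nat.sub_lt hn one_pos)] at ha hb
    exact ⟨rfl, Or.inr ⟨ha, hb⟩⟩
  · simp only [chainModel, Set.mem_ofPred_eq, atomIndex_apply hp (hjk.trans hk),
      atomIndex_apply hp hk] at ha ha'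
    omega

lemma eq_of_entails_al_atom (hn : 0 < n) (hp : ∀ i < n, ∀ j < n, p i = p j → i = j)
    {q q' : ℕ} (h : Entails (GammaSet n p r) (.al (atomE q) (atomE q'))) : q = q' :=
  atomIndex_injective (h _ ⟨(0, true)⟩ _ (chainModel_satSet hn hp)
    (rfl : (atomIndex n p q, true).1 = _) : atomIndex n p q = atomIndex n p q')

lemma entails_al_ex_pos (hn : 0 < n) (hp : ∀ i < n, ∀ j < n, p i = p j → i = j)
    {q q' s : ℕ} (h : Entails (GammaSet n p r) (.al (atomE q) (.ex (.pos q') (.pos s)))) :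
    s = r ∧ ((∃ j, j + 1 < n ∧ q = p j ∧ q' = p (j + 1)) ∨ (q = p 0 ∧ q' = p (n - 1))) := by
  obtain ⟨b, hb, hsr, hedge⟩ := h _ ⟨(0, true)⟩ _ (chainModel_satSet hn hp)
    (rfl : (atomIndex n p q, true).1 = _)
  change (b = (atomIndex n p q + 1, false) ∧ _) ∨ (atomIndex n p q = 0 ∧ b.1 = n - 1) at hedge
  refine ⟨hsr, ?_⟩
  rcases hedge with ⟨rfl, hlt⟩ | ⟨h0, hb'⟩
  · exact Or.inl ⟨_, hlt, eq_apply_of_atomIndex_eq rfl (by omega),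
      eq_apply_of_atomIndex_eq hb.symm hlt⟩
  · exact Or.inr ⟨eq_apply_of_atomIndex_eq h0 hn,
      eq_apply_of_atomIndex_eq (hb.symm.trans hb') (by omega)⟩

lemma entails_al_al_pos (hn : 0 < n) (hp : ∀ i < n, ∀ j < n, p i = p j → i = j)
    {q q' s : ℕ} (h : Entails (GammaSet n p r) (.al (atomE q) (.al (.pos q') (.pos s)))) :
    s = r ∧ q = p 0 ∧ q' = p (n - 1) := by
  obtain ⟨hsr, hedge⟩ := h _ ⟨(0, true)⟩ _ (chainModel_satSet hn hp)
    (rfl : (atomIndex n p q, true).1 = _) (atomIndex n p q', true) rfl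
  rcases hedge with ⟨hedge, -⟩ | hedge
  · simp at hedge
  · exact ⟨hsr, eq_apply_of_atomIndex_eq hedge.1 hn,
      eq_apply_of_atomIndex_eq hedge.2 (by omega)⟩

noncomputable def truncModel (n : ℕ) (p : ℕ → ℕ) (i : ℕ) : Interp ℕ :=
  ⟨fun x => {a | a = atomIndex n p x ∧ a ≤ i}, fun _ => {ab | ab.2 = ab.1 + 1}⟩

lemma mem_truncModel_up (hp : ∀ i < n, ∀ j < n, p i = p j → i = j) {i j a : ℕ} (hj : j < n) :
    a ∈ (truncModel n p i).up (p j) ↔ a = j ∧ a ≤ i := by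
  change a = atomIndex n p (p j) ∧ a ≤ i ↔ _
  rw [atomIndex_apply hp hj]

lemma truncModel_satSet (hp : ∀ i < n, ∀ j < n, p i = p j → i = j) {i : ℕ} (hi : i + 1 < n) :
    (truncModel n p i).SatSet (DeltaSet n p r i) := by
  refine satSet_of_subset_gammaSet _ Set.sdiff_subset (fun j hj hji a ha => ?_)
    (fun a _ b hb => ?_) fun j k hjk hk a ha ha' => ?_
  · obtain ⟨rfl, hai⟩ := (mem_truncModel_up hp (Nat.lt_of_succ_lt hj)).1 ha
    have hai : a < i := lt_of_le_of_ne hai fun hai => hji.2 (by rw [hai]; rfl)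
    exact ⟨a + 1, (mem_truncModel_up hp hj).2 ⟨rfl, hai⟩, rfl⟩
  · have := (mem_truncModel_up hp (by omega)).1 hb
    omega
  · have := (mem_truncModel_up hp (hjk.trans hk)).1 ha
    have := (mem_truncModel_up hp hk).1 ha'
    omega

lemma not_entails_al_first_ex_last (hp : ∀ i < n, ∀ j < n, p i = p j → i = j) {i : ℕ}
    (hi : i + 1 < n) :
    ¬ Entails (DeltaSet n p r i) (.al (atomE (p 0)) (.ex (.pos (p (n - 1))) (.pos r))) := by
  intro h
  obtain ⟨b, hb, -⟩ := h ℕ ⟨0⟩ _ (truncModel_satSet hp hi) (a := 0)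
    ((mem_truncModel_up hp (by omega)).2 ⟨rfl, Nat.zero_le i⟩)
  have := (mem_truncModel_up hp (by omega)).1 hb
  omega

end Countermodels

section CaseAnalysis

variable {n : ℕ} {p : ℕ → ℕ} {r : ℕ}

lemma memMod_of_entails_al_ex (hp : ∀ i < n, ∀ j < n, p i = p j → i = j) {i : ℕ}
    (hi : i + 1 < n) {q q' : ℕ} {t : BLit}
    (h : Entails (DeltaSet n p r i) (.al (atomE q) (.ex (.pos q') t))) :
    MemMod (GammaSet n p r) (.al (atomE q) (.ex (.pos q') t)) := by
  have hΓ := h.mono Set.sdiff_subset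
  cases t with
  | neg s => exact (not_entails_al_ex_neg hp q q' s hΓ).elim
  | pos s =>
    obtain ⟨rfl, ⟨j, hj, rfl, rfl⟩ | ⟨rfl, rfl⟩⟩ := entails_al_ex_pos (by omega) hp hΓ
    · exact ⟨_, Or.inl ⟨j, hj, rfl⟩, Or.inl rfl⟩
    · exact (not_entails_al_first_ex_last hp hi h).elim

lemma memMod_of_entails_al_al (hn : 0 < n) (hp : ∀ i < n, ∀ j < n, p i = p j → i = j)
    {q q' : ℕ} {t : BLit} (h : Entails (GammaSet n p r) (.al (atomE q) (.al (.pos q') t))) :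
    MemMod (GammaSet n p r) (.al (atomE q) (.al (.pos q') t)) := by
  cases t with
  | neg s => exact (not_entails_al_al_neg hp q q' s h).elim
  | pos s =>
    obtain ⟨rfl, rfl, rfl⟩ := entails_al_al_pos hn hp h
    exact ⟨_, Or.inr (Or.inl rfl), Or.inl rfl⟩

lemma memMod_of_entails_al (hp : ∀ i < n, ∀ j < n, p i = p j → i = j) {i : ℕ}
    (hi : i + 1 < n) {q : ℕ} {c : ETerm} (hc : c.isC)
    (h : Entails (DeltaSet n p r i) (.al (atomE q) c)) :
    MemMod (GammaSet n p r) (.al (atomE q) c) := by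
  have hΓ := h.mono Set.sdiff_subset
  match c, hc with
  | .lit (.pos q'), _ =>
    obtain rfl := eq_of_entails_al_atom (by omega) hp hΓ
    exact ⟨_, Or.inr (Or.inr (Or.inl ⟨q, rfl⟩)), Or.inl rfl⟩
  | .lit (.neg _), _ =>
    obtain ⟨j, k, hj, hk, hjk, rfl, rfl⟩ := exists_of_entails_al_lit_neg hp hΓ
    rcases Nat.lt_or_gt_of_ne hjk with hlt | hlt
    · exact ⟨_, Or.inr (Or.inr (Or.inr ⟨j, k, hlt, hk, rfl⟩)), Or.inl rfl⟩
    · exact ⟨_, Or.inr (Or.inr (Or.inr ⟨k, j, hlt, hj, rfl⟩)), Or.inr rfl⟩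
  | .ex (.pos _) _, _ => exact memMod_of_entails_al_ex hp hi h
  | .al (.pos _) _, _ => exact memMod_of_entails_al_al (by omega) hp hΓ

end CaseAnalysis

theorem delta_entails_mem_gamma_general (n : ℕ) (p : ℕ → ℕ)
    (hp : ∀ i < n, ∀ j < n, p i = p j → i = j) (r : ℕ) :
    ∀ i, i + 1 < n → ∀ φ : Formula, φ ∈ FragR →
      Entails (GammaSet n p r \
          {Formula.al (atomE (p i)) (ETerm.ex (Lit.pos (p (i + 1))) (BLit.pos r))}) φ →
      ∃ ψ ∈ GammaSet n p r, FormEquiv φ ψ := by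
  rintro i hi φ ⟨q, c, hc, rfl | rfl | rfl | rfl⟩ h
  · exact (not_entails_ex_atom Set.sdiff_subset q c h).elim
  · exact (not_entails_ex_atom Set.sdiff_subset q c h.swap).elim
  · exact memMod_of_entails_al hp hi hc h
  · exact MemMod.of_swap (memMod_of_entails_al hp hi hc.bar h.swap)

/-- every R-formula entailed by `Δᵢ` already belongs to `Γ`
(modulo the identification). -/
theorem delta_entails_mem_gamma (n : ℕ) (hn : 2 ≤ n) (p : ℕ → ℕ)
    (hp : ∀ i < n, ∀ j < n, p i = p j → i = j) (r : ℕ) :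
    ∀ i, i + 1 < n → ∀ φ : Formula, φ ∈ FragR →
      Entails (GammaSet n p r \
          {Formula.al (atomE (p i)) (ETerm.ex (Lit.pos (p (i + 1))) (BLit.pos r))}) φ →
      ∃ ψ ∈ GammaSet n p r, FormEquiv φ ψ :=
  delta_entails_mem_gamma_general n p hp r

end Syllogistic
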